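/- (Ordering of the support for the weighted squared-ℓ₁ prox on the nonnegative orthant.) Let λ > 0, a ∈ ℝ^p with a > 0 coordinatewise, and u₀ ∈ ℝ^p with u₀ ≥ 0. Let u* be the minimizer over {u ∈ ℝ^p : u ≥ 0} of F(u) = (1/2)Σ_{r=1}^p a_r (u_r − u_{0r})² + (λ/2)(Σ_{r=1}^p a_r u_r)². If u*_k = 0 and u_{0j} < u_{0k} for some indices j, k, then u*_j = 0. -/
import Mathlib


noncomputable section

/-- The weighted squared-`ℓ₁` prox objective on the nonnegative orthant:
`F(u) = (1/2) Σ_r a_r (u_r − u₀ᵣ)² + (λ/2)(Σ_r a_r u_r)²`. -/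
def weightedProxObj {p : ℕ} (lam : ℝ) (a u₀ u : Fin p → ℝ) : ℝ :=
  (1 / 2) * (∑ r, a r * (u r - u₀ r) ^ 2) + lam / 2 * (∑ r, a r * u r) ^ 2

lemma sum_two_diff {p : ℕ} (f g : Fin p → ℝ) (j k : Fin p) (hjk : j ≠ k)
    (h : ∀ r, r ≠ j → r ≠ k → f r = g r) :
    ∑ r, f r = (∑ r, g r) + (f j - g j) + (f k - g k) := by
  have key : ∑ r, (f r - g r) = ∑ r ∈ ({j, k} : Finset (Fin p)), (f r - g r) := by
    refine (Finset.sum_subset (Finset.subset_univ _) ?_).symm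
    intro r _ hr
    simp only [Finset.mem_insert, Finset.mem_singleton, not_or] at hr
    rw [h r hr.1 hr.2]; ring
  have hset : ∑ r ∈ ({j, k} : Finset (Fin p)), (f r - g r)
      = (f j - g j) + (f k - g k) := by
    rw [Finset.sum_insert (by simpa using hjk), Finset.sum_singleton]
  have := key.trans hset
  have hsub : ∑ r, (f r - g r) = (∑ r, f r) - ∑ r, g r := by
    rw [Finset.sum_sub_distrib]
  linarith [hsub ▸ this]

/-- ordering of the support for the weighted squared-`ℓ₁` prox on
the nonnegative orthant: if `u*` minimizes `F` over `{u : u ≥ 0}`, `u*_k = 0`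
and `u₀ⱼ < u₀ₖ`, then `u*_j = 0`. -/
theorem weighted_prox_support_ordering {p : ℕ} (lam : ℝ) (hlam : 0 < lam)
    (a : Fin p → ℝ) (ha : ∀ r, 0 < a r)
    (u₀ : Fin p → ℝ) (hu₀ : ∀ r, 0 ≤ u₀ r)
    (ustar : Fin p → ℝ) (hustar : ∀ r, 0 ≤ ustar r)
    (hmin : ∀ u : Fin p → ℝ, (∀ r, 0 ≤ u r) →
      weightedProxObj lam a u₀ ustar ≤ weightedProxObj lam a u₀ u)
    (j k : Fin p) (hk : ustar k = 0) (hjk : u₀ j < u₀ k) :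
    ustar j = 0 := by
  by_contra hj0
  have hj : 0 < ustar j := lt_of_le_of_ne (hustar j) (Ne.symm hj0)
  have hne : j ≠ k := by
    intro h; rw [h] at hjk; exact lt_irrefl _ hjk
  have haj := ha j
  have hak := ha k
  set d : ℝ := ustar j - u₀ j + u₀ k with hd_def
  have hd : 0 < d := by linarith
  have hc : 0 < 1 / a j + 1 / a k := by positivity
  set ε : ℝ := min (a j * ustar j) (d / (1 / a j + 1 / a k)) with hε_def
  have hε : 0 < ε := lt_min (by positivity) (by positivity)
  have hε1 : ε ≤ a j * ustar j := min_le_left _ _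
  have hε2 : ε * (1 / a j + 1 / a k) ≤ d := by
    have := min_le_right (a j * ustar j) (d / (1 / a j + 1 / a k))
    calc ε * (1 / a j + 1 / a k) ≤ (d / (1 / a j + 1 / a k)) * (1 / a j + 1 / a k) := by
          exact mul_le_mul_of_nonneg_right this hc.le
      _ = d := by field_simp
  set u : Fin p → ℝ :=
    Function.update (Function.update ustar j (ustar j - ε / a j)) k (ε / a k) with hu_def
  have huj : u j = ustar j - ε / a j := by
    rw [hu_def, Function.update_of_ne hne, Function.update_self]
  have huk : u k = ε / a k := by rw [hu_def, Function.update_self]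
  have huo : ∀ r, r ≠ j → r ≠ k → u r = ustar r := by
    intro r hrj hrk
    rw [hu_def, Function.update_of_ne hrk, Function.update_of_ne hrj]
  have hunn : ∀ r, 0 ≤ u r := by
    intro r
    rcases eq_or_ne r k with rfl | hrk
    · rw [huk]; positivity
    rcases eq_or_ne r j with rfl | hrj
    · rw [huj]
      have : ε / a r ≤ ustar r := by
        rw [div_le_iff₀ haj]; nlinarith
      linarith
    · rw [huo r hrj hrk]; exact hustar r
  -- the weighted sums agree
  have hS : ∑ r, a r * u r = ∑ r, a r * ustar r := by
    have key : ∑ r, a r * u r = (∑ r, a r * ustar r)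
        + (a j * u j - a j * ustar j) + (a k * u k - a k * ustar k) :=
      sum_two_diff _ _ j k hne (fun r hrj hrk => by simp only [huo r hrj hrk])
    rw [key, huj, huk, hk]
    field_simp
    ring
  have hQ : ∑ r, a r * (u r - u₀ r) ^ 2
      = (∑ r, a r * (ustar r - u₀ r) ^ 2)
        + (a j * (u j - u₀ j) ^ 2 - a j * (ustar j - u₀ j) ^ 2)
        + (a k * (u k - u₀ k) ^ 2 - a k * (ustar k - u₀ k) ^ 2) :=
    sum_two_diff _ _ j k hne (fun r hrj hrk => by rw [huo r hrj hrk])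
  have hlt : weightedProxObj lam a u₀ u < weightedProxObj lam a u₀ ustar := by
    unfold weightedProxObj
    rw [hS, hQ, huj, huk, hk]
    have haj' : a j ≠ 0 := ne_of_gt haj
    have hak' : a k ≠ 0 := ne_of_gt hak
    have e1 : a j * (ustar j - ε / a j - u₀ j) ^ 2 - a j * (ustar j - u₀ j) ^ 2
        = -2 * ε * (ustar j - u₀ j) + ε ^ 2 / a j := by
      field_simp; ring
    have e2 : a k * (ε / a k - u₀ k) ^ 2 - a k * (0 - u₀ k) ^ 2
        = -2 * ε * u₀ k + ε ^ 2 / a k := by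
      field_simp; ring
    rw [e1, e2]
    have key : ε ^ 2 / a j + ε ^ 2 / a k ≤ ε * d := by
      have : ε ^ 2 / a j + ε ^ 2 / a k = ε * (ε * (1 / a j + 1 / a k)) := by
        field_simp
      rw [this]
      exact mul_le_mul_of_nonneg_left hε2 hε.le
    nlinarith [mul_pos hε hd]
  exact absurd (hmin u hunn) (not_le.mpr hlt)
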